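/- arXiv:math/0304189 — 4 statements merged into one kernel-verified Lean document; each statement's English description precedes it below -/
import Mathlib

section
/- For a nonzero complex number z, θ(z) = 0 if and only if z = p^n for some integer n; equivalently, the zero set of the normalized Jacobi theta function is exactly the cyclic group generated by p. -/
noncomputable section

open Finset

/-- The normalized Jacobi theta function `θ(z) = ∏_{j≥0} (1 - z p^j)(1 - p^{j+1}/z)`. -/
def theta (p : ℝ) (z : ℂ) : ℂ :=
  ∏' j : ℕ, ((1 - z * (p : ℂ) ^ j) * (1 - (p : ℂ) ^ (j + 1) / z))

/-- Complex power `q ^ l := exp (l · log q)` for a real base `q`. -/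
def qp (q : ℝ) (l : ℂ) : ℂ := Complex.exp (l * (Real.log q : ℂ))

/-- Elliptic Pochhammer symbol `(a)_n = ∏_{i=0}^{n-1} θ(a q^{2i})` in base `q², p`. -/
def epoch (p q : ℝ) (a : ℂ) (n : ℕ) : ℂ :=
  ∏ i ∈ Finset.range n, theta p (a * qp q (2 * (i : ℂ)))

/-- Elliptic binomial coefficient `[k over l] = ∏_{i=1}^{l} θ(q^{2(k-l+i)})/θ(q^{2i})`. -/
def ellbin (p q : ℝ) (k l : ℕ) : ℂ :=
  ∏ i ∈ Finset.range l,
    theta p (qp q (2 * ((k : ℂ) - (l : ℂ) + (i : ℂ) + 1))) / theta p (qp q (2 * ((i : ℂ) + 1)))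

/-- Entry `a(λ,z)` of the Andrews–Baxter–Forrester `R`-matrix. -/
def Ra (p q : ℝ) (lam z : ℂ) : ℂ :=
  theta p z * theta p (qp q (2 * (lam + 2))) /
    (theta p (qp q 2 * z) * theta p (qp q (2 * (lam + 1))))

/-- Entry `b(λ,z)` of the Andrews–Baxter–Forrester `R`-matrix. -/
def Rb (p q : ℝ) (lam z : ℂ) : ℂ :=
  theta p (qp q 2) * theta p (qp q (-2 * (lam + 1)) * z) /
    (theta p (qp q 2 * z) * theta p (qp q (-2 * (lam + 1))))

/-- Entry `c(λ,z)` of the Andrews–Baxter–Forrester `R`-matrix. -/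
def Rc (p q : ℝ) (lam z : ℂ) : ℂ :=
  theta p (qp q 2) * theta p (qp q (2 * (lam + 1)) * z) /
    (theta p (qp q 2 * z) * theta p (qp q (2 * (lam + 1))))

/-- Entry `d(λ,z)` of the Andrews–Baxter–Forrester `R`-matrix. -/
def Rd (p q : ℝ) (lam z : ℂ) : ℂ :=
  theta p z * theta p (qp q (-2 * lam)) /
    (theta p (qp q 2 * z) * theta p (qp q (-2 * (lam + 1))))

/-- Coefficient `A_k(λ,z)` of the Felder–Varchenko dynamical representation `π^ω`. -/
def Ak (p q : ℝ) (om : ℂ) (k : ℕ) (lam z : ℂ) : ℂ :=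
  qp q (2 * (k : ℂ)) * theta p (qp q (-2 * (lam + 1) - 2 * (k : ℂ))) *
      theta p (z * qp q (om - 2 * (k : ℂ) + 1)) /
    (theta p (qp q (-2 * (lam + 1))) * theta p (z * qp q (om + 1)))

/-- Coefficient `B_k(λ,z)` of the Felder–Varchenko dynamical representation `π^ω`. -/
def Bk (p q : ℝ) (om : ℂ) (k : ℕ) (lam z : ℂ) : ℂ :=
  qp q (k : ℂ) * theta p (qp q 2) *
      theta p (z * qp q (-2 * (lam + 1) + om - 2 * (k : ℂ) - 1)) /
    (theta p (qp q (-2 * (lam + 1))) * theta p (z * qp q (om + 1)))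

/-- Coefficient `C_k(λ,z)` of the Felder–Varchenko dynamical representation `π^ω`;
`C_0 = 0`. -/
def Ck (p q : ℝ) (om : ℂ) (k : ℕ) (lam z : ℂ) : ℂ :=
  if k = 0 then 0
  else
    qp q (-((k : ℂ) - 1)) * theta p (qp q (2 * (k : ℂ))) *
        theta p (qp q (2 * (om - (k : ℂ) + 1))) *
        theta p (z * qp q (2 * (lam + 1) - om + 2 * (k : ℂ) - 1)) /
      (theta p (qp q 2) * theta p (qp q (2 * (lam + 1))) * theta p (z * qp q (om + 1)))

/-- Coefficient `D_k(λ,z)` of the Felder–Varchenko dynamical representation `π^ω`. -/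
def Dk (p q : ℝ) (om : ℂ) (k : ℕ) (lam z : ℂ) : ℂ :=
  theta p (qp q (-2 * (lam + 1 - om + (k : ℂ)))) * theta p (z * qp q (-om + 2 * (k : ℂ) + 1)) /
    (theta p (qp q (-2 * (lam + 1))) * theta p (z * qp q (om + 1)))

/-- `F(μ) = q^μ θ(q^{-2(μ+1)})`. -/
def Fdet (p q : ℝ) (mu : ℂ) : ℂ := qp q mu * theta p (qp q (-2 * (mu + 1)))

/-- The coefficient `C_{kl}(μ)` from the corepresentation matrix elements. -/
def Ckl (p q : ℝ) (k l : ℕ) (mu : ℂ) : ℂ :=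
  ellbin p q k l * epoch p q (qp q (2 * (mu - (l : ℂ) + 2))) l /
    epoch p q (qp q (2 * (mu + (k : ℂ) - 2 * (l : ℂ) + 2))) l

/-- The terminating balanced very-well-poised elliptic hypergeometric series
`₁₀ω₉(a₁; a₄,…,a₁₀)`, truncated at `n`. -/
def tenW9 (p q : ℝ) (n : ℕ) (a1 a4 a5 a6 a7 a8 a9 a10 : ℂ) : ℂ :=
  ∑ k ∈ Finset.range (n + 1),
    theta p (a1 * qp q (4 * (k : ℂ))) / theta p a1 *
      (epoch p q a1 k * epoch p q a4 k * epoch p q a5 k * epoch p q a6 k * epoch p q a7 k *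
        epoch p q a8 k * epoch p q a9 k * epoch p q a10 k * qp q (2 * (k : ℂ))) /
      (epoch p q (qp q 2) k * epoch p q (a1 * qp q 2 / a4) k * epoch p q (a1 * qp q 2 / a5) k *
        epoch p q (a1 * qp q 2 / a6) k * epoch p q (a1 * qp q 2 / a7) k *
        epoch p q (a1 * qp q 2 / a8) k * epoch p q (a1 * qp q 2 / a9) k *
        epoch p q (a1 * qp q 2 / a10) k)

/-- The product of all theta factors appearing in denominators of the terms of
`tenW9 p q n a1 a4 … a10` (including the `θ(a₁)` from the very-well-poised prefactor). -/
def tenW9Den (p q : ℝ) (n : ℕ) (a1 a4 a5 a6 a7 a8 a9 a10 : ℂ) : ℂ :=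
  theta p a1 * epoch p q (qp q 2) n * epoch p q (a1 * qp q 2 / a4) n *
    epoch p q (a1 * qp q 2 / a5) n * epoch p q (a1 * qp q 2 / a6) n *
    epoch p q (a1 * qp q 2 / a7) n * epoch p q (a1 * qp q 2 / a8) n *
    epoch p q (a1 * qp q 2 / a9) n * epoch p q (a1 * qp q 2 / a10) n


/-!
A factor `(1 - z q^j)(1 - q^{j+1}/z)` of the theta product vanishes exactly when `z = q^{-j}` or
`z = q^{j+1}`, so the zeros of the factors are precisely the integer powers of `q`. Conversely, each
factor differs from `1` by `O(|q|^j)`, so for `|q| < 1` the product converges absolutely and can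
only vanish if one of its factors does.
-/

def thetaFactor (q z : ℂ) (j : ℕ) : ℂ :=
  (1 - z * q ^ j) * (1 - q ^ (j + 1) / z)

theorem theta_eq_tprod_thetaFactor (p : ℝ) (z : ℂ) :
    theta p z = ∏' j, thetaFactor p z j :=
  rfl

section thetaFactor

variable {q z : ℂ}

theorem thetaFactor_eq_zero_iff (hz : z ≠ 0) (j : ℕ) :
    thetaFactor q z j = 0 ↔ z = q ^ (-(j : ℤ)) ∨ z = q ^ ((j : ℤ) + 1) := by
  have hinv : 1 - z * q ^ j = 0 ↔ z = (q ^ j)⁻¹ := by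
    rw [sub_eq_zero, eq_comm]
    refine ⟨eq_inv_of_mul_eq_one_left, fun h => ?_⟩
    have hqj : q ^ j ≠ 0 := fun h0 => hz (by simpa [h0] using h)
    rw [h, inv_mul_cancel₀ hqj]
  have hdiv : 1 - q ^ (j + 1) / z = 0 ↔ z = q ^ (j + 1) := by
    rw [sub_eq_zero, eq_comm, div_eq_one_iff_eq hz, eq_comm]
  rw [thetaFactor, mul_eq_zero, hinv, hdiv, zpow_neg, zpow_natCast, ← Nat.cast_succ,
    zpow_natCast]

theorem exists_thetaFactor_eq_zero_iff (hz : z ≠ 0) :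
    (∃ j, thetaFactor q z j = 0) ↔ ∃ n : ℤ, z = q ^ n := by
  simp only [thetaFactor_eq_zero_iff hz]
  constructor
  · rintro ⟨j, h | h⟩ <;> exact ⟨_, h⟩
  · rintro ⟨n, rfl⟩
    rcases le_or_gt n 0 with hn | hn
    · exact ⟨(-n).toNat, Or.inl (by congr 1; omega)⟩
    · exact ⟨(n - 1).toNat, Or.inr (by congr 1; omega)⟩

theorem norm_thetaFactor_sub_one_le (hq : ‖q‖ ≤ 1) (hz : z ≠ 0) (j : ℕ) :
    ‖thetaFactor q z j - 1‖ ≤ (‖z‖ + ‖q‖ / ‖z‖ + ‖q‖) * ‖q‖ ^ j := by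
  have hexpand : thetaFactor q z j - 1 = -(z * q ^ j) - q ^ (j + 1) / z + q ^ j * q ^ (j + 1) := by
    rw [thetaFactor]
    field_simp
    ring
  have hqj : ‖q‖ ^ j ≤ 1 := pow_le_one₀ (norm_nonneg q) hq
  calc ‖thetaFactor q z j - 1‖
      ≤ ‖z * q ^ j‖ + ‖q ^ (j + 1) / z‖ + ‖q ^ j * q ^ (j + 1)‖ := by
        rw [hexpand, ← norm_neg (z * q ^ j)]
        exact (norm_add_le _ _).trans (add_le_add_left (norm_sub_le _ _) _)
    _ = ‖z‖ * ‖q‖ ^ j + ‖q‖ / ‖z‖ * ‖q‖ ^ j + ‖q‖ ^ j * (‖q‖ * ‖q‖ ^ j) := by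
        simp only [norm_mul, norm_div, norm_pow, pow_succ]
        ring
    _ ≤ ‖z‖ * ‖q‖ ^ j + ‖q‖ / ‖z‖ * ‖q‖ ^ j + 1 * (‖q‖ * ‖q‖ ^ j) := by gcongr
    _ = (‖z‖ + ‖q‖ / ‖z‖ + ‖q‖) * ‖q‖ ^ j := by ring

theorem summable_norm_thetaFactor_sub_one (hq : ‖q‖ < 1) (hz : z ≠ 0) :
    Summable fun j => ‖thetaFactor q z j - 1‖ :=
  Summable.of_nonneg_of_le (fun _ => norm_nonneg _) (norm_thetaFactor_sub_one_le hq.le hz)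
    ((summable_geometric_of_lt_one (norm_nonneg q) hq).mul_left _)

theorem tprod_thetaFactor_eq_zero_iff (hq : ‖q‖ < 1) (hz : z ≠ 0) :
    ∏' j, thetaFactor q z j = 0 ↔ ∃ j, thetaFactor q z j = 0 := by
  refine ⟨fun h => ?_, tprod_of_exists_eq_zero⟩
  by_contra! hne
  refine tprod_one_add_ne_zero_of_summable (f := fun j => thetaFactor q z j - 1) ?_
    (summable_norm_thetaFactor_sub_one hq hz) ?_
  · simpa only [add_sub_cancel] using hne
  · simpa only [add_sub_cancel] using h

end thetaFactor

/-- For nonzero complex `z`, `θ(z) = 0` iff `z = p^n` for some integer `n`: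
the zero set of the normalized Jacobi theta function is exactly the cyclic
group generated by `p`. -/
theorem theta_zero_iff (p : ℝ) (hp0 : 0 < p) (hp1 : p < 1) (z : ℂ) (hz : z ≠ 0) :
    theta p z = 0 ↔ ∃ n : ℤ, z = (p : ℂ) ^ n := by
  have hp : ‖(p : ℂ)‖ < 1 := by
    rwa [Complex.norm_real, Real.norm_of_nonneg hp0.le]
  rw [theta_eq_tprod_thetaFactor, tprod_thetaFactor_eq_zero_iff hp hz,
    exists_thetaFactor_eq_zero_iff hz]

end
end

section
/- For all λ ∈ ℂ and nonzero complex z, w such that all theta factors appearing in denominators are nonzero, the R-matrix entries satisfy the two identities: −c(λ+1, z/w) = b(λ, w/(q²z)) / a(λ, w/(q²z)), and d(λ+1, z/w) = 1 / a(λ, w/(q²z)). -/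
noncomputable section

open Finset

/-!
Splitting off the `j = 0` factor of the first half of the product shows
`θ(z) = (1 - z) ∏_{j ≥ 1} (1 - z p^j)(1 - p^j / z)`, whose tail is symmetric under `z ↦ 1/z`;
hence `θ(1/z) = -z⁻¹ θ(z)`. Writing `t = z/w`, `Q = q²`, `B = q^{2(λ+1)}`, the argument
`w/(q²z)` is `(Qt)⁻¹`, and this inversion turns all four entries into quotients of
`θ(t), θ(Qt), θ(QBt), θ(Q), θ(B), θ(QB)` and powers of `Q`; the two identities are then
identities of rational functions in these quantities.
-/

lemma multipliable_one_sub_mul_pow_add {x : ℂ} (hx : ‖x‖ < 1) (c : ℂ) (k : ℕ) :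
    Multipliable fun j : ℕ => 1 - c * x ^ (j + k) := by
  have hsum : Summable fun j : ℕ => -(c * x ^ k) * x ^ j :=
    (summable_geometric_of_norm_lt_one hx).mul_left _
  convert Complex.multipliable_one_add_of_summable hsum using 2 with j
  ring

lemma theta_eq_mul_tprod_mul_tprod {p : ℝ} (hp : |p| < 1) (z : ℂ) :
    theta p z = (1 - z) * (∏' j : ℕ, (1 - z * (p : ℂ) ^ (j + 1))) *
      ∏' j : ℕ, (1 - z⁻¹ * (p : ℂ) ^ (j + 1)) := by
  have hp' : ‖(p : ℂ)‖ < 1 := by rwa [Complex.norm_real, Real.norm_eq_abs]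
  have hfirst : ∏' j : ℕ, (1 - z * (p : ℂ) ^ j) =
      (1 - z) * ∏' j : ℕ, (1 - z * (p : ℂ) ^ (j + 1)) := by
    rw [tprod_eq_zero_mul' (f := fun j => 1 - z * (p : ℂ) ^ j)
      (multipliable_one_sub_mul_pow_add hp' z 1), pow_zero, mul_one]
  simp only [theta, div_eq_inv_mul]
  have hmul : Multipliable fun j : ℕ => 1 - z * (p : ℂ) ^ j := by
    simpa using multipliable_one_sub_mul_pow_add hp' z 0
  rw [hmul.tprod_mul (multipliable_one_sub_mul_pow_add hp' z⁻¹ 1), hfirst]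

lemma theta_inv {p : ℝ} (hp : |p| < 1) {z : ℂ} (hz : z ≠ 0) :
    theta p z⁻¹ = -z⁻¹ * theta p z := by
  rw [theta_eq_mul_tprod_mul_tprod hp, theta_eq_mul_tprod_mul_tprod hp, inv_inv]
  field_simp
  ring

lemma qp_add (q : ℝ) (a b : ℂ) : qp q (a + b) = qp q a * qp q b := by
  simp only [qp, add_mul, Complex.exp_add]

lemma qp_neg (q : ℝ) (a : ℂ) : qp q (-a) = (qp q a)⁻¹ := by
  simp only [qp, neg_mul, Complex.exp_neg]

lemma qp_ne_zero (q : ℝ) (a : ℂ) : qp q a ≠ 0 := Complex.exp_ne_zero _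

lemma qp_two_mul_add_one (q : ℝ) (a : ℂ) : qp q (2 * (a + 1)) = qp q 2 * qp q (2 * a) := by
  rw [← qp_add]; ring_nf

lemma qp_neg_two_mul (q : ℝ) (a : ℂ) : qp q (-2 * a) = (qp q (2 * a))⁻¹ := by
  rw [← qp_neg, neg_mul]

lemma qp_mul_inv_qp_mul (q : ℝ) (a t : ℂ) : qp q a * (qp q a * t)⁻¹ = t⁻¹ := by
  rw [mul_inv, ← mul_assoc, mul_inv_cancel₀ (qp_ne_zero q a), one_mul]

lemma Ra_inv_eq {p : ℝ} (hp : |p| < 1) (q : ℝ) (lam : ℂ) {t : ℂ} (ht : t ≠ 0) :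
    Ra p q lam (qp q 2 * t)⁻¹ =
      theta p (qp q 2 * t) * theta p (qp q 2 * qp q (2 * (lam + 1))) /
        (qp q 2 * theta p t * theta p (qp q (2 * (lam + 1)))) := by
  have hQ := qp_ne_zero q 2
  rw [Ra, theta_inv hp (mul_ne_zero hQ ht), qp_mul_inv_qp_mul q 2 t, theta_inv hp ht,
    show lam + 2 = lam + 1 + 1 by ring, qp_two_mul_add_one]
  field_simp

lemma Rb_inv_eq {p : ℝ} (hp : |p| < 1) (q : ℝ) (lam : ℂ) {t : ℂ} (ht : t ≠ 0) :
    Rb p q lam (qp q 2 * t)⁻¹ =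
      -(theta p (qp q 2) * theta p (qp q 2 * qp q (2 * (lam + 1)) * t) /
        (qp q 2 * theta p t * theta p (qp q (2 * (lam + 1))))) := by
  have hQ := qp_ne_zero q 2
  have hB := qp_ne_zero q (2 * (lam + 1))
  rw [Rb, qp_neg_two_mul, ← mul_inv, qp_mul_inv_qp_mul q 2 t,
    show qp q (2 * (lam + 1)) * (qp q 2 * t) = qp q 2 * qp q (2 * (lam + 1)) * t by ring,
    theta_inv hp (mul_ne_zero (mul_ne_zero hQ hB) ht), theta_inv hp ht, theta_inv hp hB]
  field_simp

lemma Rc_add_one (p q : ℝ) (lam t : ℂ) :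
    Rc p q (lam + 1) t =
      theta p (qp q 2) * theta p (qp q 2 * qp q (2 * (lam + 1)) * t) /
        (theta p (qp q 2 * t) * theta p (qp q 2 * qp q (2 * (lam + 1)))) := by
  rw [Rc, qp_two_mul_add_one]

lemma Rd_add_one {p : ℝ} (hp : |p| < 1) (q : ℝ) (lam t : ℂ) :
    Rd p q (lam + 1) t =
      qp q 2 * theta p t * theta p (qp q (2 * (lam + 1))) /
        (theta p (qp q 2 * t) * theta p (qp q 2 * qp q (2 * (lam + 1)))) := by
  have hQ := qp_ne_zero q 2
  have hB := qp_ne_zero q (2 * (lam + 1))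
  rw [Rd, qp_neg_two_mul, qp_neg_two_mul, qp_two_mul_add_one q (lam + 1), theta_inv hp hB,
    theta_inv hp (mul_ne_zero hQ hB)]
  field_simp

theorem Rmatrix_shift_identities_general (p q : ℝ) (hp0 : 0 < p) (hp1 : p < 1)
    (lam z w : ℂ) (hz : z ≠ 0) (hw : w ≠ 0)
    (h1 : theta p (qp q 2 * (z / w)) ≠ 0)
    (h2 : theta p (qp q 2 * (w / (qp q 2 * z))) ≠ 0)
    (h3 : theta p (qp q (2 * (lam + 2))) ≠ 0)
    (h5 : theta p (qp q (2 * (lam + 1))) ≠ 0) :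
    -Rc p q (lam + 1) (z / w) =
        Rb p q lam (w / (qp q 2 * z)) / Ra p q lam (w / (qp q 2 * z)) ∧
      Rd p q (lam + 1) (z / w) = 1 / Ra p q lam (w / (qp q 2 * z)) := by
  have hp : |p| < 1 := abs_lt.2 ⟨by linarith, hp1⟩
  have hQ := qp_ne_zero q 2
  have harg : w / (qp q 2 * z) = (qp q 2 * (z / w))⁻¹ := by field_simp
  have ht : z / w ≠ 0 := div_ne_zero hz hw
  set t := z / w
  have htheta : theta p t ≠ 0 := by
    rw [harg, qp_mul_inv_qp_mul q 2 t, theta_inv hp ht] at h2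
    exact right_ne_zero_of_mul h2
  rw [show lam + 2 = lam + 1 + 1 by ring, qp_two_mul_add_one] at h3
  rw [harg, Ra_inv_eq hp q lam ht, Rb_inv_eq hp q lam ht, Rc_add_one, Rd_add_one hp]
  constructor <;> field_simp

/-- The identities `-c(λ+1, z/w) = b(λ, w/(q²z))/a(λ, w/(q²z))` and
`d(λ+1, z/w) = 1/a(λ, w/(q²z))`. -/
theorem Rmatrix_shift_identities (p q : ℝ) (hp0 : 0 < p) (hp1 : p < 1)
    (hq0 : 0 < q) (hq1 : q < 1) (lam z w : ℂ) (hz : z ≠ 0) (hw : w ≠ 0)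
    (h1 : theta p (qp q 2 * (z / w)) ≠ 0)
    (h2 : theta p (qp q 2 * (w / (qp q 2 * z))) ≠ 0)
    (h3 : theta p (qp q (2 * (lam + 2))) ≠ 0)
    (h4 : theta p (qp q (-2 * (lam + 2))) ≠ 0)
    (h5 : theta p (qp q (2 * (lam + 1))) ≠ 0)
    (h6 : theta p (qp q (-2 * (lam + 1))) ≠ 0)
    (h7 : theta p (w / (qp q 2 * z)) ≠ 0) :
    -Rc p q (lam + 1) (z / w) =
        Rb p q lam (w / (qp q 2 * z)) / Ra p q lam (w / (qp q 2 * z)) ∧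
      Rd p q (lam + 1) (z / w) = 1 / Ra p q lam (w / (qp q 2 * z)) :=
  Rmatrix_shift_identities_general p q hp0 hp1 lam z w hz hw h1 h2 h3 h5

end
end

section
/- For all integers 0 ≤ l ≤ k and all μ ∈ ℂ for which all theta factors appearing in denominators are nonzero, the coefficients C_{kl}(μ) satisfy the contiguous relation C_{k+1,l}(μ) = C_{k,l}(μ) · θ(q^{2(k+1)})θ(q^{2(μ+k−2l+2)}) / (θ(q^{2(k−l+1)})θ(q^{2(μ+k−l+2)})). -/
noncomputable section

open Finset

/-- Telescoping helper. -/
lemma tele_aux (g : ℕ → ℂ) (l : ℕ) :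
    (∏ i ∈ Finset.range l, g (i + 1)) * g 0 = (∏ i ∈ Finset.range l, g i) * g l := by
  rw [← Finset.prod_range_succ', Finset.prod_range_succ]

lemma epoch_qp (p q : ℝ) (m : ℂ) (l : ℕ) :
    epoch p q (qp q (2 * m)) l = ∏ i ∈ Finset.range l, theta p (qp q (2 * (m + (i : ℂ)))) := by
  unfold epoch
  refine Finset.prod_congr rfl fun i _ => ?_
  rw [← qp_add]; ring_nf

lemma epoch_shift (p q : ℝ) (m : ℂ) (l : ℕ) :
    epoch p q (qp q (2 * (m + 1))) l * theta p (qp q (2 * m)) =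
      epoch p q (qp q (2 * m)) l * theta p (qp q (2 * (m + (l : ℂ)))) := by
  rw [epoch_qp, epoch_qp]
  have h := tele_aux (fun i => theta p (qp q (2 * (m + (i : ℂ))))) l
  simp only [Nat.cast_zero, add_zero] at h
  calc (∏ i ∈ Finset.range l, theta p (qp q (2 * (m + 1 + (i : ℂ))))) * theta p (qp q (2 * m))
      = (∏ i ∈ Finset.range l, theta p (qp q (2 * (m + ((i : ℕ) + 1 : ℕ))))) *
          theta p (qp q (2 * m)) := by
        congr 1; refine Finset.prod_congr rfl fun i _ => ?_; push_cast; ring_nf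
    _ = (∏ i ∈ Finset.range l, theta p (qp q (2 * (m + (i : ℂ))))) *
          theta p (qp q (2 * (m + (l : ℂ)))) := h

lemma ellbin_succ (p q : ℝ) (k l : ℕ) :
    ellbin p q (k + 1) l * theta p (qp q (2 * ((k : ℂ) - (l : ℂ) + 1))) =
      ellbin p q k l * theta p (qp q (2 * ((k : ℂ) + 1))) := by
  unfold ellbin
  rw [Finset.prod_div_distrib, Finset.prod_div_distrib, div_mul_eq_mul_div,
    div_mul_eq_mul_div]
  congr 1
  have h := tele_aux (fun i => theta p (qp q (2 * ((k : ℂ) - (l : ℂ) + 1 + (i : ℂ))))) l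
  simp only [Nat.cast_zero, add_zero] at h
  calc (∏ i ∈ Finset.range l, theta p (qp q (2 * (((k : ℕ) + 1 : ℕ) - (l : ℂ) + (i : ℂ) + 1)))) *
        theta p (qp q (2 * ((k : ℂ) - (l : ℂ) + 1)))
      = (∏ i ∈ Finset.range l,
          theta p (qp q (2 * ((k : ℂ) - (l : ℂ) + 1 + ((i : ℕ) + 1 : ℕ))))) *
          theta p (qp q (2 * ((k : ℂ) - (l : ℂ) + 1))) := by
        congr 1; refine Finset.prod_congr rfl fun i _ => ?_; push_cast; ring_nf
    _ = (∏ i ∈ Finset.range l, theta p (qp q (2 * ((k : ℂ) - (l : ℂ) + 1 + (i : ℂ))))) *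
          theta p (qp q (2 * ((k : ℂ) - (l : ℂ) + 1 + (l : ℂ)))) := h
    _ = (∏ i ∈ Finset.range l, theta p (qp q (2 * ((k : ℂ) - (l : ℂ) + (i : ℂ) + 1)))) *
          theta p (qp q (2 * ((k : ℂ) + 1))) := by
        congr 1
        · refine Finset.prod_congr rfl fun i _ => ?_; ring_nf
        · ring_nf

/-- Contiguous relation for `C_{kl}(μ)` raising `k`. -/
theorem Ckl_raise_k (p q : ℝ) (hp0 : 0 < p) (hp1 : p < 1) (hq0 : 0 < q) (hq1 : q < 1)
    (k l : ℕ) (hlk : l ≤ k) (mu : ℂ)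
    (h1 : theta p (qp q (2 * ((k : ℂ) - (l : ℂ) + 1))) ≠ 0)
    (h2 : theta p (qp q (2 * (mu + (k : ℂ) - (l : ℂ) + 2))) ≠ 0)
    (h3 : epoch p q (qp q (2 * (mu + (k : ℂ) - 2 * (l : ℂ) + 2))) l ≠ 0)
    (h4 : epoch p q (qp q (2 * (mu + (k : ℂ) + 1 - 2 * (l : ℂ) + 2))) l ≠ 0)
    (h5 : ∀ i : ℕ, i < l → theta p (qp q (2 * ((i : ℂ) + 1))) ≠ 0) :
    Ckl p q (k + 1) l mu =
      Ckl p q k l mu *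
        (theta p (qp q (2 * ((k : ℂ) + 1))) *
          theta p (qp q (2 * (mu + (k : ℂ) - 2 * (l : ℂ) + 2)))) /
        (theta p (qp q (2 * ((k : ℂ) - (l : ℂ) + 1))) *
          theta p (qp q (2 * (mu + (k : ℂ) - (l : ℂ) + 2)))) := by
  have key1 := ellbin_succ p q k l
  have key2 := epoch_shift p q (mu + (k : ℂ) - 2 * (l : ℂ) + 2) l
  have e4 : epoch p q (qp q (2 * (mu + ((k : ℕ) + 1 : ℕ) - 2 * (l : ℂ) + 2))) l =
      epoch p q (qp q (2 * (mu + (k : ℂ) - 2 * (l : ℂ) + 2 + 1))) l := by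
    push_cast; ring_nf
  have h4' : epoch p q (qp q (2 * (mu + (k : ℂ) - 2 * (l : ℂ) + 2 + 1))) l ≠ 0 := by
    have : (2 : ℂ) * (mu + (k : ℂ) + 1 - 2 * (l : ℂ) + 2) =
        2 * (mu + (k : ℂ) - 2 * (l : ℂ) + 2 + 1) := by ring
    rwa [this] at h4
  have h2' : theta p (qp q (2 * (mu + (k : ℂ) - 2 * (l : ℂ) + 2 + (l : ℂ)))) ≠ 0 := by
    have : (2 : ℂ) * (mu + (k : ℂ) - (l : ℂ) + 2) =
        2 * (mu + (k : ℂ) - 2 * (l : ℂ) + 2 + (l : ℂ)) := by ring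
    rwa [this] at h2
  unfold Ckl
  rw [e4]
  have hth2 : theta p (qp q (2 * (mu + (k : ℂ) - (l : ℂ) + 2))) =
      theta p (qp q (2 * (mu + (k : ℂ) - 2 * (l : ℂ) + 2 + (l : ℂ)))) := by ring_nf
  rw [hth2, div_mul_eq_mul_div, div_div,
    div_eq_div_iff h4' (mul_ne_zero h3 (mul_ne_zero h1 h2'))]
  linear_combination (epoch p q (qp q (2 * (mu - (l : ℂ) + 2))) l *
      epoch p q (qp q (2 * (mu + (k : ℂ) - 2 * (l : ℂ) + 2))) l *
      theta p (qp q (2 * (mu + (k : ℂ) - 2 * (l : ℂ) + 2 + (l : ℂ))))) * key1 -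
    (ellbin p q k l * theta p (qp q (2 * ((k : ℂ) + 1))) *
      epoch p q (qp q (2 * (mu - (l : ℂ) + 2))) l) * key2


end
end

section
/- The coefficients of the Felder–Varchenko dynamical representation satisfy the intertwining identity corresponding to the relation δ(z)β(q²z) = β(z)δ(q²z): for every integer k ≥ 0 and all λ, ω ∈ ℂ and nonzero complex z for which all theta factors appearing in denominators are nonzero, D_{k+1}(λ, z)·B_k(λ+1, q²z) = B_k(λ, z)·D_k(λ+1, q²z). -/
noncomputable section

open Finset

/-- Intertwining identity corresponding to `δ(z)β(q²z) = β(z)δ(q²z)`: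
`D_{k+1}(λ,z) B_k(λ+1, q²z) = B_k(λ,z) D_k(λ+1, q²z)`. -/
theorem dynrep_delta_beta (p q : ℝ) (hp0 : 0 < p) (hp1 : p < 1) (hq0 : 0 < q) (hq1 : q < 1)
    (k : ℕ) (lam om z : ℂ) (hz : z ≠ 0)
    (h1 : theta p (qp q (-2 * (lam + 1))) ≠ 0)
    (h2 : theta p (qp q (-2 * (lam + 2))) ≠ 0)
    (h3 : theta p (z * qp q (om + 1)) ≠ 0)
    (h4 : theta p (qp q 2 * z * qp q (om + 1)) ≠ 0) :
    Dk p q om (k + 1) lam z * Bk p q om k (lam + 1) (qp q 2 * z) =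
      Bk p q om k lam z * Dk p q om k (lam + 1) (qp q 2 * z) := by
  have hqp : ∀ a b : ℂ, qp q a * qp q b = qp q (a + b) := fun a b => by
    simp [qp, ← Complex.exp_add, add_mul]
  have r1 : ∀ a : ℂ, qp q 2 * z * qp q a = z * qp q (a + 2) := fun a => by
    rw [mul_comm (qp q 2) z, mul_assoc, mul_comm (qp q 2), hqp]
  unfold Dk Bk
  push_cast
  rw [r1, r1, r1,
    show (-2 * (lam + 1 - om + ((k:ℂ) + 1))) = (-2 * (lam + 1 + 1 - om + (k:ℂ))) from by ring,
    show (-2 * (lam + 1 + 1) + om - 2 * (k:ℂ) - 1 + 2) = (-2 * (lam + 1) + om - 2 * (k:ℂ) - 1)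
      from by ring,
    show (-om + 2 * (k:ℂ) + 1 + 2) = (-om + 2 * ((k:ℂ) + 1) + 1) from by ring]
  ring

end
end
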